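/- In G_m, the elements b_i := a'_i·a''_i (i = 0, …, m-1) pairwise commute and generate a free abelian subgroup of rank m. -/

import Mathlib

/-!
For `i < j`, conjugation by `a'_j` and by `a''_j` both swap `a'_i` and `a''_i`, so conjugation by
`b_j = a'_j a''_j` fixes `b_i`: the `b_i` commute. Hence `e_i ↦ b_i` extends to a homomorphism
`ℤ^m → G_m` whose image is the subgroup generated by the `b_i`. It is injective because `G_m` acts
on `ℤ^m` coordinatewise through the infinite dihedral group, with `b_i` acting as the translation
by `2` in the `i`-th coordinate.
-/

open FreeGroup

/-- Generators of the groups `G_m` and `G̃_m`: `.inl (i, false)` is `a'_i`,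
`.inl (i, true)` is `a''_i`, and `.inr ()` is `a_m`. -/
abbrev Gen (m : ℕ) := (Fin m × Bool) ⊕ Unit

/-- The defining relators of the group `G_m`. -/
def Gm.rels (m : ℕ) : Set (FreeGroup (Gen m)) :=
  {w | (∃ i : Fin m, ∃ t : Bool, w = of (.inl (i, t)) * of (.inl (i, t)))
    ∨ w = of (.inr ()) * of (.inr ())
    ∨ (∃ i j : Fin m, i < j ∧
        (w = of (.inl (i, false)) * of (.inl (j, false)) *
             (of (.inl (j, false)) * of (.inl (i, true)))⁻¹
       ∨ w = of (.inl (i, false)) * of (.inl (j, true)) *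
             (of (.inl (j, true)) * of (.inl (i, true)))⁻¹))
    ∨ (∃ i : Fin m, w = of (.inl (i, false)) * of (.inr ()) *
             (of (.inr ()) * of (.inl (i, true)))⁻¹)}

/-- The group `G_m`. -/
abbrev Gm (m : ℕ) := PresentedGroup (Gm.rels m)

def Gm.a' {m : ℕ} (i : Fin m) : Gm m := PresentedGroup.of (.inl (i, false))
def Gm.a'' {m : ℕ} (i : Fin m) : Gm m := PresentedGroup.of (.inl (i, true))
def Gm.am (m : ℕ) : Gm m := PresentedGroup.of (.inr ())

theorem MulEquiv.piMultiplicative_ofAdd_single {ι : Type*} [DecidableEq ι] {K : ι → Type*}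
    [∀ i, AddZeroClass (K i)] (i : ι) (x : K i) :
    piMultiplicative K (Multiplicative.ofAdd (Pi.single i x)) =
      (Pi.mulSingle i (Multiplicative.ofAdd x) : ∀ j, Multiplicative (K j)) := by
  ext k
  rcases eq_or_ne k i with rfl | hk <;> simp [*]

theorem MonoidHom.ext_ofAdd_single {ι M : Type*} [Finite ι] [DecidableEq ι] [Monoid M]
    {f g : Multiplicative (ι → ℤ) →* M}
    (h : ∀ i, f (Multiplicative.ofAdd (Pi.single i 1)) =
      g (Multiplicative.ofAdd (Pi.single i 1))) :
    f = g := by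
  let e := MulEquiv.piMultiplicative fun _ : ι => ℤ
  suffices f.comp e.symm.toMonoidHom = g.comp e.symm.toMonoidHom from
    (MonoidHom.cancel_right e.symm.surjective).1 this
  refine MonoidHom.pi_ext fun i x => ?_
  have hi : (f.comp e.symm.toMonoidHom).comp (MonoidHom.mulSingle _ i) =
      (g.comp e.symm.toMonoidHom).comp (MonoidHom.mulSingle _ i) := by
    have he : e.symm (Pi.mulSingle i (Multiplicative.ofAdd 1)) =
        Multiplicative.ofAdd (Pi.single i 1) :=
      e.symm_apply_eq.2 (MulEquiv.piMultiplicative_ofAdd_single i 1).symm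
    refine MonoidHom.ext_mint ?_
    simpa [he] using h i
  exact DFunLike.congr_fun hi x

section CommutingFamily

variable {G ι : Type*} [Group G] {b : ι → G}

theorem Pairwise.commute_zpowersHom (hb : Pairwise fun i j => Commute (b i) (b j)) :
    Pairwise fun i j => ∀ x y : Multiplicative ℤ,
      Commute (zpowersHom G (b i) x) (zpowersHom G (b j) y) :=
  fun _ _ hij _ _ => (hb hij).zpow_zpow _ _

variable [Fintype ι]

def zpowersPiHom (hb : Pairwise fun i j => Commute (b i) (b j)) : Multiplicative (ι → ℤ) →* G :=
  (MonoidHom.noncommPiCoprod (fun i => zpowersHom G (b i)) hb.commute_zpowersHom).comp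
    (MulEquiv.piMultiplicative fun _ => ℤ).toMonoidHom

variable (hb : Pairwise fun i j => Commute (b i) (b j))

theorem zpowersPiHom_ofAdd_single [DecidableEq ι] (i : ι) :
    zpowersPiHom hb (Multiplicative.ofAdd (Pi.single i 1)) = b i := by
  rw [zpowersPiHom, MonoidHom.comp_apply, MulEquiv.coe_toMonoidHom,
    MulEquiv.piMultiplicative_ofAdd_single, MonoidHom.noncommPiCoprod_mulSingle, zpowersHom_apply,
    toAdd_ofAdd, zpow_one]

theorem range_zpowersPiHom : (zpowersPiHom hb).range = Subgroup.closure (Set.range b) := by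
  rw [zpowersPiHom, MonoidHom.range_comp, MonoidHom.range_eq_top.2 (MulEquiv.surjective _),
    ← MonoidHom.range_eq_map, MonoidHom.noncommPiCoprod_range, Set.range_eq_iUnion,
    Subgroup.closure_iUnion]
  simp only [Subgroup.range_zpowersHom, Subgroup.zpowers_eq_closure]

end CommutingFamily

namespace DihedralGroup

-- `ZMod 0` unfolds to `ℤ`, so without the explicit `Int.cast` no coercion would be inserted and
-- `simp` would see `ℤ`-arithmetic inside `r`.
def doubleRotations (ι : Type*) : Multiplicative (ι → ℤ) →* (ι → DihedralGroup 0) where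
  toFun v k := r (Int.cast (2 * v.toAdd k))
  map_one' := by ext k; simp
  map_mul' v w := by ext k; simp [mul_add]

theorem doubleRotations_injective (ι : Type*) :
    Function.Injective (doubleRotations ι) := by
  intro v w h
  ext k
  have h2 : 2 * v.toAdd k = 2 * w.toAdd k :=
    Int.cast_injective (α := ZMod 0) (r.inj (congrFun h k))
  omega

end DihedralGroup

open DihedralGroup

namespace Gm

variable {m : ℕ}

theorem a'_mul_self (i : Fin m) : a' i * a' i = 1 :=
  PresentedGroup.one_of_mem (Or.inl ⟨i, false, rfl⟩)

theorem a''_mul_self (i : Fin m) : a'' i * a'' i = 1 :=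
  PresentedGroup.one_of_mem (Or.inl ⟨i, true, rfl⟩)

theorem a'_mul_a' {i j : Fin m} (hij : i < j) : a' i * a' j = a' j * a'' i :=
  PresentedGroup.mk_eq_mk_of_mul_inv_mem (Or.inr (Or.inr (Or.inl ⟨i, j, hij, Or.inl rfl⟩)))

theorem a'_mul_a'' {i j : Fin m} (hij : i < j) : a' i * a'' j = a'' j * a'' i :=
  PresentedGroup.mk_eq_mk_of_mul_inv_mem (Or.inr (Or.inr (Or.inl ⟨i, j, hij, Or.inr rfl⟩)))

theorem inv_a' (i : Fin m) : (a' i)⁻¹ = a' i := inv_eq_of_mul_eq_one_right (a'_mul_self i)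

theorem inv_a'' (i : Fin m) : (a'' i)⁻¹ = a'' i := inv_eq_of_mul_eq_one_right (a''_mul_self i)

def b (i : Fin m) : Gm m := a' i * a'' i

theorem commute_b_of_lt {i j : Fin m} (hij : i < j) : Commute (b j) (b i) := by
  have h₁ : a' j * a' i = a'' i * a' j := by
    simpa [inv_a', inv_a''] using congrArg (·⁻¹) (a'_mul_a' hij)
  have h₂ : a'' j * a' i = a'' i * a'' j := by
    simpa [inv_a', inv_a''] using congrArg (·⁻¹) (a'_mul_a'' hij)
  have ha' : Commute (b j) (a' i) := by
    simp only [Commute, SemiconjBy, b, mul_assoc, h₂]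
    simp only [← mul_assoc, a'_mul_a' hij]
  have ha'' : Commute (b j) (a'' i) := by
    simp only [Commute, SemiconjBy, b, mul_assoc, ← a'_mul_a'' hij]
    simp only [← mul_assoc, h₁]
  exact ha'.mul_right ha''

theorem commute_b (i j : Fin m) : Commute (b i) (b j) := by
  rcases lt_trichotomy i j with hij | rfl | hij
  · exact (commute_b_of_lt hij).symm
  · exact Commute.refl _
  · exact commute_b_of_lt hij

theorem pairwise_commute_b : Pairwise fun i j : Fin m => Commute (b i) (b j) :=
  fun i j _ => commute_b i j

/-- With `DihedralGroup 0` acting on `ℤ` by `r k : x ↦ x + k` and `sr k : x ↦ -x - k`, the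
generators `a'_i` and `a''_i` act on the `i`-th coordinate by the reflections `x ↦ 1 - x` and
`x ↦ -1 - x`, on the earlier coordinates by `x ↦ -x`, and trivially on the later ones, while `a_m`
acts on every coordinate by `x ↦ -x`. -/
def genToDihedral : Gen m → Fin m → DihedralGroup 0
  | .inl (i, t), k => if k < i then sr 0 else if k = i then sr (if t then 1 else -1) else 1
  | .inr (), _ => sr 0

theorem lift_genToDihedral_rels : ∀ w ∈ rels m, FreeGroup.lift genToDihedral w = 1 := by
  rintro w (⟨i, t, rfl⟩ | rfl | ⟨i, j, hij, rfl | rfl⟩ | ⟨i, rfl⟩) <;> funext k <;>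
    simp only [_root_.map_mul, _root_.map_inv, FreeGroup.lift_apply_of, genToDihedral,
      Pi.mul_apply, Pi.inv_apply, Pi.one_apply] <;>
    (try split_ifs) <;> simp_all [one_def, -r_zero] <;> omega

def toDihedral : Gm m →* (Fin m → DihedralGroup 0) :=
  PresentedGroup.toGroup lift_genToDihedral_rels

theorem toDihedral_b (i : Fin m) :
    toDihedral (b i) = doubleRotations (Fin m) (Multiplicative.ofAdd (Pi.single i 1)) := by
  ext k
  simp only [b, a', a'', toDihedral, _root_.map_mul, PresentedGroup.toGroup.of, Pi.mul_apply,
    genToDihedral, doubleRotations, MonoidHom.coe_mk, OneHom.coe_mk, toAdd_ofAdd]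
  rcases lt_trichotomy k i with hki | rfl | hik
  · simp [hki, hki.ne]
  · norm_num
  · simp [hik.ne', not_lt.2 hik.le]

theorem toDihedral_comp_zpowersPiHom :
    toDihedral.comp (zpowersPiHom pairwise_commute_b) = doubleRotations (Fin m) :=
  MonoidHom.ext_ofAdd_single fun i => by
    rw [MonoidHom.comp_apply, zpowersPiHom_ofAdd_single, toDihedral_b]

end Gm

/-- In `G_m`, the elements `b_i := a'_i · a''_i` pairwise commute and generate
a free abelian subgroup of rank `m`. -/
theorem stmt_16 (m : ℕ) :
    (∀ i j : Fin m,
      Commute (Gm.a' i * Gm.a'' i) (Gm.a' j * Gm.a'' j)) ∧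
    (∃ φ : Multiplicative (Fin m → ℤ) →* Gm m,
      Function.Injective φ ∧
      (∀ i : Fin m,
        φ (Multiplicative.ofAdd (Pi.single i 1)) = Gm.a' i * Gm.a'' i) ∧
      φ.range = Subgroup.closure (Set.range fun i : Fin m => Gm.a' i * Gm.a'' i)) := by
  refine ⟨Gm.commute_b, zpowersPiHom Gm.pairwise_commute_b, ?_,
    zpowersPiHom_ofAdd_single _, range_zpowersPiHom _⟩
  refine Function.Injective.of_comp (f := Gm.toDihedral) ?_
  rw [← MonoidHom.coe_comp, Gm.toDihedral_comp_zpowersPiHom]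
  exact DihedralGroup.doubleRotations_injective _
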